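/- arXiv:1311.6802 — 2 statements merged into one kernel-verified Lean document; each statement's English description precedes it below -/
import Mathlib

section
/- Let the marginal likelihood of a rating vector r given type t be g(t) = ∫_{ℝ^d} exp(−‖r − V u − z_t‖²/(2σ₀²)) · exp(−‖u‖²/(2σ_u²)) du. Then g(+1) = g(−1) · exp( 2 δᵀ M r̄ / σ₀² ); equivalently, the log-likelihood ratio of the two types given the ratings equals 2 δᵀ M r̄ / σ₀². -/
/-!
With `a = r - z_t`, the two Gaussian factors combine into `exp (-(‖a - V u‖² + λ‖u‖²) / (2σ₀²))`,
whose exponent is a ridge-regression objective in `u`. Completing the square at the ridge solution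
`u* = Σ⁻¹ Vᵀ a` splits it into the same objective at `a = 0`, evaluated at `u - u*`, plus `aᵀ M a`;
translation invariance of Lebesgue measure then gives `g t = exp (-aᵀ M a / (2σ₀²)) · C` with
`C > 0` independent of `t`. Finally `r - z_± = r̄ ∓ δ`, and for symmetric `M` the two quadratic
forms differ by `4 δᵀ M r̄`.
-/

open Matrix MeasureTheory Real

section Ridge

variable {m n : Type*} [Fintype m]

lemma isSymm_smul_one_add_transpose_mul_self [DecidableEq n] (V : Matrix m n ℝ) (lam : ℝ) :
    (lam • (1 : Matrix n n ℝ) + Vᵀ * V).IsSymm := by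
  rw [IsSymm, transpose_add, transpose_smul, transpose_one, transpose_mul, transpose_transpose]

variable [Fintype n]

def ridgeObjective (V : Matrix m n ℝ) (lam : ℝ) (a : m → ℝ) (u : n → ℝ) : ℝ :=
  (a - V *ᵥ u) ⬝ᵥ (a - V *ᵥ u) + lam * (u ⬝ᵥ u)

variable [DecidableEq n] (V : Matrix m n ℝ) {lam : ℝ}

lemma ridgeObjective_eq_sub_add_dotProduct_mulVec (a : m → ℝ) (u : n → ℝ) :
    ridgeObjective V lam a u =
      a ⬝ᵥ a - 2 * ((Vᵀ *ᵥ a) ⬝ᵥ u) + u ⬝ᵥ (lam • 1 + Vᵀ * V) *ᵥ u := by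
  have hV : a ⬝ᵥ V *ᵥ u = (Vᵀ *ᵥ a) ⬝ᵥ u := by
    rw [← dotProduct_transpose_mulVec, dotProduct_comm]
  have hVV : u ⬝ᵥ (Vᵀ * V) *ᵥ u = (V *ᵥ u) ⬝ᵥ (V *ᵥ u) := by
    rw [← mulVec_mulVec, dotProduct_transpose_mulVec]
  simp only [ridgeObjective, add_mulVec, smul_mulVec, one_mulVec, dotProduct_add,
    dotProduct_smul, smul_eq_mul, sub_dotProduct, dotProduct_sub, hVV, hV,
    dotProduct_comm (V *ᵥ u) a]
  ring

lemma posDef_smul_one_add_transpose_mul_self (hlam : 0 < lam) :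
    (lam • (1 : Matrix n n ℝ) + Vᵀ * V).PosDef :=
  (PosDef.one.smul hlam).add_posSemidef (by simpa using posSemidef_conjTranspose_mul_self V)

lemma ridgeObjective_add_inv_mulVec [DecidableEq m] {Sig : Matrix n n ℝ}
    (hSig : Sig = lam • 1 + Vᵀ * V) (hdet : IsUnit Sig.det) (a : m → ℝ) (u : n → ℝ) :
    ridgeObjective V lam a (u + Sig⁻¹ *ᵥ (Vᵀ *ᵥ a)) =
      ridgeObjective V lam 0 u + a ⬝ᵥ (1 - V * Sig⁻¹ * Vᵀ) *ᵥ a := by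
  simp only [ridgeObjective_eq_sub_add_dotProduct_mulVec, ← hSig]
  set b := Vᵀ *ᵥ a
  set w := Sig⁻¹ *ᵥ b
  have hSw : Sig *ᵥ w = b := by rw [mulVec_mulVec, mul_nonsing_inv Sig hdet, one_mulVec]
  have hSym : Sigᵀ = Sig := hSig ▸ isSymm_smul_one_add_transpose_mul_self V lam
  have hwu : w ⬝ᵥ Sig *ᵥ u = b ⬝ᵥ u := by
    rw [← hSym, dotProduct_transpose_mulVec, hSw, dotProduct_comm]
  have hM : a ⬝ᵥ (1 - V * Sig⁻¹ * Vᵀ) *ᵥ a = a ⬝ᵥ a - b ⬝ᵥ w := by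
    rw [sub_mulVec, one_mulVec, dotProduct_sub, ← mulVec_mulVec, ← mulVec_mulVec,
      ← dotProduct_transpose_mulVec, dotProduct_comm b w]
  simp only [hM, mulVec_add, dotProduct_add, add_dotProduct, hSw, hwu, mulVec_zero,
    dotProduct_zero, zero_dotProduct]
  rw [dotProduct_comm u b, dotProduct_comm w b]
  ring

end Ridge

section Marginal

variable {m n : Type*} [Fintype m] [Fintype n]

lemma integrable_exp_neg_mul_dotProduct_self {b : ℝ} (hb : 0 < b) :
    Integrable fun u : n → ℝ => exp (-b * (u ⬝ᵥ u)) := by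
  have hprod : (fun u : n → ℝ => exp (-b * (u ⬝ᵥ u))) = fun u => ∏ i, exp (-b * u i ^ 2) := by
    ext u
    simp only [← exp_sum, dotProduct, Finset.mul_sum, sq]
  rw [hprod]
  exact Integrable.fintype_prod (f := fun _ x => exp (-b * x ^ 2))
    fun _ => integrable_exp_neg_mul_sq hb

lemma integrable_exp_neg_ridgeObjective (V : Matrix m n ℝ) {lam c : ℝ} (hlam : 0 < lam)
    (hc : 0 < c) (a : m → ℝ) :
    Integrable fun u => exp (-ridgeObjective V lam a u / c) := by
  refine (integrable_exp_neg_mul_dotProduct_self (div_pos hlam hc)).mono' ?_ ?_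
  · have hcont : Continuous fun u => ridgeObjective V lam a u := by
      unfold ridgeObjective
      fun_prop
    fun_prop
  · refine Filter.Eventually.of_forall fun u => ?_
    have hres : 0 ≤ (a - V *ᵥ u) ⬝ᵥ (a - V *ᵥ u) := by
      simpa using dotProduct_self_star_nonneg (a - V *ᵥ u)
    rw [norm_of_nonneg (exp_nonneg _), exp_le_exp, ridgeObjective, neg_div, neg_mul,
      neg_le_neg_iff, div_mul_eq_mul_div, div_le_div_iff_of_pos_right hc]
    linarith

noncomputable def gaussianMarginal (V : Matrix m n ℝ) (σ₀ σu : ℝ) (a : m → ℝ) : ℝ :=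
  ∫ u : n → ℝ, exp (-((a - V *ᵥ u) ⬝ᵥ (a - V *ᵥ u)) / (2 * σ₀ ^ 2)) *
    exp (-(u ⬝ᵥ u) / (2 * σu ^ 2))

variable (V : Matrix m n ℝ) {σ₀ σu : ℝ}

lemma gaussianMarginal_eq_integral_exp_neg_ridgeObjective (hσ₀ : σ₀ ≠ 0) (hσu : σu ≠ 0)
    (a : m → ℝ) :
    gaussianMarginal V σ₀ σu a =
      ∫ u, exp (-ridgeObjective V (σ₀ ^ 2 / σu ^ 2) a u / (2 * σ₀ ^ 2)) := by
  unfold gaussianMarginal ridgeObjective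
  congr 1
  ext u
  rw [← exp_add]
  congr 1
  field_simp
  ring

lemma gaussianMarginal_pos (hσ₀ : σ₀ ≠ 0) (hσu : σu ≠ 0) (a : m → ℝ) :
    0 < gaussianMarginal V σ₀ σu a := by
  rw [gaussianMarginal_eq_integral_exp_neg_ridgeObjective V hσ₀ hσu]
  exact integral_exp_pos (integrable_exp_neg_ridgeObjective V (by positivity) (by positivity) a)

lemma integral_exp_neg_ridgeObjective [DecidableEq m] [DecidableEq n] {lam : ℝ}
    {Sig : Matrix n n ℝ} (hSig : Sig = lam • 1 + Vᵀ * V) (hdet : IsUnit Sig.det) (c : ℝ)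
    (a : m → ℝ) :
    ∫ u, exp (-ridgeObjective V lam a u / c) =
      exp (-(a ⬝ᵥ (1 - V * Sig⁻¹ * Vᵀ) *ᵥ a) / c) * ∫ u, exp (-ridgeObjective V lam 0 u / c) := by
  rw [← integral_add_right_eq_self _ (Sig⁻¹ *ᵥ (Vᵀ *ᵥ a)), ← integral_const_mul]
  congr 1
  ext u
  rw [ridgeObjective_add_inv_mulVec V hSig hdet, ← exp_add]
  ring_nf

lemma gaussianMarginal_eq_exp_mul [DecidableEq m] [DecidableEq n] (hσ₀ : σ₀ ≠ 0) (hσu : σu ≠ 0)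
    {Sig : Matrix n n ℝ} (hSig : Sig = (σ₀ ^ 2 / σu ^ 2) • 1 + Vᵀ * V) (a : m → ℝ) :
    gaussianMarginal V σ₀ σu a =
      exp (-(a ⬝ᵥ (1 - V * Sig⁻¹ * Vᵀ) *ᵥ a) / (2 * σ₀ ^ 2)) * gaussianMarginal V σ₀ σu 0 := by
  have hdet : IsUnit Sig.det :=
    (hSig ▸ posDef_smul_one_add_transpose_mul_self V (by positivity)).det_pos.ne'.isUnit
  simp only [gaussianMarginal_eq_integral_exp_neg_ridgeObjective V hσ₀ hσu]
  exact integral_exp_neg_ridgeObjective V hSig hdet _ a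

end Marginal

lemma isSymm_one_sub_mul_inv_mul_transpose {m n R : Type*} [Fintype m] [Fintype n]
    [DecidableEq m] [DecidableEq n] [CommRing R] {S : Matrix n n R} (hS : S.IsSymm)
    (V : Matrix m n R) : (1 - V * S⁻¹ * Vᵀ).IsSymm :=
  isSymm_one.sub <| by
    rw [IsSymm, transpose_mul, transpose_mul, transpose_transpose, hS.inv.eq, Matrix.mul_assoc]

lemma Matrix.IsSymm.dotProduct_mulVec_add_sub_dotProduct_mulVec_sub {n R : Type*} [Fintype n]
    [CommRing R] {A : Matrix n n R} (hA : A.IsSymm) (x y : n → R) :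
    (x + y) ⬝ᵥ A *ᵥ (x + y) - (x - y) ⬝ᵥ A *ᵥ (x - y) = 4 * (y ⬝ᵥ A *ᵥ x) := by
  have hxy : x ⬝ᵥ A *ᵥ y = y ⬝ᵥ A *ᵥ x := by
    simpa [hA.eq] using dotProduct_transpose_mulVec A x y
  simp only [mulVec_add, mulVec_sub, dotProduct_add, dotProduct_sub, add_dotProduct,
    sub_dotProduct, hxy]
  ring

theorem fbc_likelihood_ratio_general (d k : ℕ)
    (V : Matrix (Fin k) (Fin d) ℝ) (σ₀ σu : ℝ) (hσ₀ : 0 < σ₀) (hσu : 0 < σu)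
    (lam : ℝ) (hlam : lam = σ₀ ^ 2 / σu ^ 2)
    (Sig : Matrix (Fin d) (Fin d) ℝ)
    (hSig : Sig = lam • (1 : Matrix (Fin d) (Fin d) ℝ) + Vᵀ * V)
    (M : Matrix (Fin k) (Fin k) ℝ)
    (hM : M = (1 : Matrix (Fin k) (Fin k) ℝ) - V * Sig⁻¹ * Vᵀ)
    (zp zm r : Fin k → ℝ)
    (δ : Fin k → ℝ) (hδ : δ = (1 / 2 : ℝ) • (zp - zm))
    (rbar : Fin k → ℝ) (hrbar : rbar = r - (1 / 2 : ℝ) • (zp + zm))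
    (z : ℤ → Fin k → ℝ) (hz₁ : z 1 = zp) (hz₂ : z (-1) = zm)
    (g : ℤ → ℝ)
    (hg : ∀ t : ℤ, g t =
      ∫ u : Fin d → ℝ,
        Real.exp (-((r - V.mulVec u - z t) ⬝ᵥ (r - V.mulVec u - z t)) / (2 * σ₀ ^ 2)) *
          Real.exp (-(u ⬝ᵥ u) / (2 * σu ^ 2))) :
    g 1 = g (-1) * Real.exp (2 * (δ ⬝ᵥ M.mulVec rbar) / σ₀ ^ 2) ∧
    Real.log (g 1 / g (-1)) = 2 * (δ ⬝ᵥ M.mulVec rbar) / σ₀ ^ 2 := by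
  subst hlam
  have hg_marginal (t : ℤ) : g t = gaussianMarginal V σ₀ σu (r - z t) := by
    simp only [hg, gaussianMarginal, sub_right_comm r]
  have h_plus : r - z 1 = rbar - δ := by rw [hz₁, hδ, hrbar]; module
  have h_minus : r - z (-1) = rbar + δ := by rw [hz₂, hδ, hrbar]; module
  have hM_symm : M.IsSymm :=
    hM ▸ isSymm_one_sub_mul_inv_mul_transpose (hSig ▸ isSymm_smul_one_add_transpose_mul_self V _) V
  have h_ratio : g 1 = g (-1) * exp (2 * (δ ⬝ᵥ M *ᵥ rbar) / σ₀ ^ 2) := by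
    rw [hg_marginal, hg_marginal, h_plus, h_minus,
      gaussianMarginal_eq_exp_mul V hσ₀.ne' hσu.ne' hSig, ← hM,
      gaussianMarginal_eq_exp_mul V hσ₀.ne' hσu.ne' hSig (rbar + δ), ← hM,
      mul_right_comm, ← exp_add]
    congr 2
    have hquad := IsSymm.dotProduct_mulVec_add_sub_dotProduct_mulVec_sub hM_symm rbar δ
    field_simp
    linarith
  have hg_minus_pos : 0 < g (-1) := hg_marginal (-1) ▸ gaussianMarginal_pos V hσ₀.ne' hσu.ne' _
  exact ⟨h_ratio, by rw [h_ratio, mul_div_cancel_left₀ _ hg_minus_pos.ne', log_exp]⟩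

/-- Likelihood-ratio identity: `g(+1) = g(−1) · exp(2 δᵀ M r̄ / σ₀²)`; equivalently the
log-likelihood ratio of the two types given the ratings equals `2 δᵀ M r̄ / σ₀²`. -/
theorem fbc_likelihood_ratio (d k : ℕ) (hd : 0 < d) (hk : 0 < k)
    (V : Matrix (Fin k) (Fin d) ℝ) (σ₀ σu : ℝ) (hσ₀ : 0 < σ₀) (hσu : 0 < σu)
    (lam : ℝ) (hlam : lam = σ₀ ^ 2 / σu ^ 2)
    (Sig : Matrix (Fin d) (Fin d) ℝ)
    (hSig : Sig = lam • (1 : Matrix (Fin d) (Fin d) ℝ) + Vᵀ * V)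
    (M : Matrix (Fin k) (Fin k) ℝ)
    (hM : M = (1 : Matrix (Fin k) (Fin k) ℝ) - V * Sig⁻¹ * Vᵀ)
    (zp zm r : Fin k → ℝ)
    (δ : Fin k → ℝ) (hδ : δ = (1 / 2 : ℝ) • (zp - zm))
    (rbar : Fin k → ℝ) (hrbar : rbar = r - (1 / 2 : ℝ) • (zp + zm))
    (z : ℤ → Fin k → ℝ) (hz₁ : z 1 = zp) (hz₂ : z (-1) = zm)
    (g : ℤ → ℝ)
    (hg : ∀ t : ℤ, g t =
      ∫ u : Fin d → ℝ,
        Real.exp (-((r - V.mulVec u - z t) ⬝ᵥ (r - V.mulVec u - z t)) / (2 * σ₀ ^ 2)) *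
          Real.exp (-(u ⬝ᵥ u) / (2 * σu ^ 2))) :
    g 1 = g (-1) * Real.exp (2 * (δ ⬝ᵥ M.mulVec rbar) / σ₀ ^ 2) ∧
    Real.log (g 1 / g (-1)) = 2 * (δ ⬝ᵥ M.mulVec rbar) / σ₀ ^ 2 :=
  fbc_likelihood_ratio_general d k V σ₀ σu hσ₀ hσu lam hlam Sig hSig M hM zp zm r δ hδ rbar hrbar z
    hz₁ hz₂ g hg
end

section
/- Decision boundary with non-uniform type priors: let the marginal likelihood of a rating vector r given type t be g(t) = ∫_{ℝ^d} exp(−‖r − V u − z_t‖²/(2σ₀²)) · exp(−‖u‖²/(2σ_u²)) du, and let π₊, π₋ > 0 be prior probabilities of the two types. Then π₊·g(+1) ≥ π₋·g(−1) if and only if 2·δᵀ M r̄ / σ₀² + log(π₊/π₋) ≥ 0; i.e., the maximum a-posteriori type under the priors (π₊, π₋) is +1 exactly when this inequality holds. -/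
open Matrix MeasureTheory Real

/-!
Completing the square in `u` (with `Σ = λ I + VᵀV`) rewrites the integrand of `g(t)` as
`exp(-w_tᵀ M w_t / (2σ₀²))` times the Gaussian `exp(-(u - μ_t)ᵀ Σ (u - μ_t) / (2σ₀²))`, where
`w_t = r - z_t` and `μ_t = Σ⁻¹ Vᵀ w_t`. By translation invariance the remaining integral is the
same positive number for both types, so the comparison of `π₊ g(+1)` and `π₋ g(-1)` is one of
`log π - w_tᵀ M w_t / (2σ₀²)`. Since `w_± = r̄ ∓ δ` and `M` is symmetric, the difference of the
quadratic forms is `4 δᵀ M r̄`.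
-/

namespace Matrix

variable {m n R : Type*}

lemma IsSymm.dotProduct_mulVec_comm [Fintype n] [CommSemiring R] {S : Matrix n n R}
    (hS : S.IsSymm) (x y : n → R) : x ⬝ᵥ S *ᵥ y = y ⬝ᵥ S *ᵥ x := by
  rw [dotProduct_mulVec, ← mulVec_transpose, hS.eq, dotProduct_comm]

lemma IsSymm.dotProduct_mulVec_add_sub_sub [Fintype n] [CommRing R] {S : Matrix n n R}
    (hS : S.IsSymm) (x y : n → R) :
    (x + y) ⬝ᵥ S *ᵥ (x + y) - (x - y) ⬝ᵥ S *ᵥ (x - y) = 4 * (y ⬝ᵥ S *ᵥ x) := by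
  simp only [add_dotProduct, sub_dotProduct, mulVec_add, mulVec_sub, dotProduct_add,
    dotProduct_sub, hS.dotProduct_mulVec_comm x y]
  ring

lemma IsSymm.dotProduct_mulVec_sub_two_mul_dotProduct [Fintype n] [DecidableEq n] [CommRing R]
    {S : Matrix n n R} (hS : S.IsSymm) (hdet : IsUnit S.det) (x b : n → R) :
    x ⬝ᵥ S *ᵥ x - 2 * (x ⬝ᵥ b) =
      (x - S⁻¹ *ᵥ b) ⬝ᵥ S *ᵥ (x - S⁻¹ *ᵥ b) - b ⬝ᵥ S⁻¹ *ᵥ b := by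
  have hb : S *ᵥ (S⁻¹ *ᵥ b) = b := by rw [mulVec_mulVec, mul_nonsing_inv _ hdet, one_mulVec]
  simp only [sub_dotProduct, mulVec_sub, dotProduct_sub, hb,
    hS.dotProduct_mulVec_comm (S⁻¹ *ᵥ b) x, dotProduct_comm b]
  ring

lemma isSymm_smul_one_add_transpose_mul [Fintype m] [DecidableEq n] [CommRing R]
    (V : Matrix m n R) (lam : R) :
    (lam • (1 : Matrix n n R) + Vᵀ * V).IsSymm :=
  (isSymm_one.smul lam).add (by rw [IsSymm, transpose_mul, transpose_transpose])

lemma isSymm_one_sub_mul_mul_transpose [Fintype n] [DecidableEq m] [CommRing R] (V : Matrix m n R)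
    {S : Matrix n n R} (hS : S.IsSymm) : (1 - V * S * Vᵀ).IsSymm := by
  refine isSymm_one.sub ?_
  rw [IsSymm, transpose_mul, transpose_mul, transpose_transpose, hS.eq, Matrix.mul_assoc]

lemma dotProduct_sub_mulVec_add_mul_dotProduct [Fintype m] [Fintype n] [DecidableEq n]
    [CommRing R] (V : Matrix m n R) (lam : R) (w : m → R) (u : n → R) :
    (w - V *ᵥ u) ⬝ᵥ (w - V *ᵥ u) + lam * (u ⬝ᵥ u) =
      u ⬝ᵥ (lam • 1 + Vᵀ * V) *ᵥ u - 2 * (u ⬝ᵥ Vᵀ *ᵥ w) + w ⬝ᵥ w := by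
  have hV : ∀ (x : n → R) (y : m → R), x ⬝ᵥ Vᵀ *ᵥ y = (V *ᵥ x) ⬝ᵥ y := fun x y => by
    rw [dotProduct_mulVec, vecMul_transpose]
  simp only [sub_dotProduct, dotProduct_sub, add_mulVec, smul_mulVec, one_mulVec,
    dotProduct_add, dotProduct_smul, smul_eq_mul, ← mulVec_mulVec, hV, dotProduct_comm w]
  ring

lemma dotProduct_sub_mulVec_add_mul_dotProduct_eq_complete_square [Fintype m] [Fintype n]
    [DecidableEq m] [DecidableEq n] [CommRing R] (V : Matrix m n R) (lam : R) {S : Matrix n n R}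
    (hS : S = lam • 1 + Vᵀ * V) (hdet : IsUnit S.det) (w : m → R) (u : n → R) :
    (w - V *ᵥ u) ⬝ᵥ (w - V *ᵥ u) + lam * (u ⬝ᵥ u) =
      (u - S⁻¹ *ᵥ Vᵀ *ᵥ w) ⬝ᵥ S *ᵥ (u - S⁻¹ *ᵥ Vᵀ *ᵥ w) +
        w ⬝ᵥ (1 - V * S⁻¹ * Vᵀ) *ᵥ w := by
  have hSymm : S.IsSymm := hS ▸ isSymm_smul_one_add_transpose_mul V lam
  have hM : w ⬝ᵥ (1 - V * S⁻¹ * Vᵀ) *ᵥ w = w ⬝ᵥ w - Vᵀ *ᵥ w ⬝ᵥ S⁻¹ *ᵥ Vᵀ *ᵥ w := by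
    rw [sub_mulVec, one_mulVec, dotProduct_sub, ← mulVec_mulVec, ← mulVec_mulVec,
      dotProduct_mulVec w V, ← mulVec_transpose]
  rw [dotProduct_sub_mulVec_add_mul_dotProduct, ← hS,
    hSymm.dotProduct_mulVec_sub_two_mul_dotProduct hdet, hM]
  ring

end Matrix

section Gaussian

variable {m n : Type*} [Fintype m] [Fintype n]

lemma mul_dotProduct_self_le_dotProduct_mulVec [DecidableEq n] (V : Matrix m n ℝ) (lam : ℝ)
    (x : n → ℝ) :
    lam * (x ⬝ᵥ x) ≤ x ⬝ᵥ (lam • 1 + Vᵀ * V) *ᵥ x := by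
  have hV : 0 ≤ x ⬝ᵥ (Vᵀ * V) *ᵥ x := by
    rw [← mulVec_mulVec, dotProduct_mulVec, vecMul_transpose]
    exact Finset.sum_nonneg fun i _ => mul_self_nonneg _
  rw [add_mulVec, smul_mulVec, one_mulVec, dotProduct_add, dotProduct_smul, smul_eq_mul]
  linarith

lemma posDef_smul_one_add_transpose_mul [DecidableEq n] (V : Matrix m n ℝ) {lam : ℝ}
    (hlam : 0 < lam) : (lam • (1 : Matrix n n ℝ) + Vᵀ * V).PosDef :=
  (PosDef.one.smul hlam).add_posSemidef <| by
    simpa only [conjTranspose_eq_transpose_of_trivial] using posSemidef_conjTranspose_mul_self V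

lemma integrable_exp_neg_dotProduct_mulVec_div {S : Matrix n n ℝ} {lam c : ℝ} (hlam : 0 < lam)
    (hc : 0 < c) (hS : ∀ x, lam * (x ⬝ᵥ x) ≤ x ⬝ᵥ S *ᵥ x) :
    Integrable fun x : n → ℝ => exp (-(x ⬝ᵥ S *ᵥ x) / c) := by
  have hprod : Integrable fun x : n → ℝ => ∏ i, exp (-(lam / c) * x i ^ 2) :=
    Integrable.fintype_prod (f := fun _ y => exp (-(lam / c) * y ^ 2))
      fun _ => integrable_exp_neg_mul_sq (by positivity)
  have hcont : Continuous fun x : n → ℝ => exp (-(x ⬝ᵥ S *ᵥ x) / c) := by fun_prop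
  refine hprod.mono' hcont.aestronglyMeasurable (ae_of_all _ fun x => ?_)
  have hdiag : ∏ i, exp (-(lam / c) * x i ^ 2) = exp (-(lam * (x ⬝ᵥ x)) / c) := by
    rw [← exp_sum]
    congr 1
    simp only [dotProduct, Finset.mul_sum, neg_div, Finset.sum_div, ← Finset.sum_neg_distrib]
    exact Finset.sum_congr rfl fun i _ => by ring
  rw [norm_of_nonneg (exp_pos _).le, hdiag, exp_le_exp]
  exact div_le_div_of_nonneg_right (neg_le_neg (hS x)) hc.le

lemma integral_exp_sub_mulVec_mul_exp_eq [DecidableEq m] [DecidableEq n] (V : Matrix m n ℝ)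
    {σ₀ σu lam : ℝ} (hσ₀ : σ₀ ≠ 0) (hlam : lam = σ₀ ^ 2 / σu ^ 2) {S : Matrix n n ℝ}
    (hS : S = lam • 1 + Vᵀ * V) (hdet : IsUnit S.det) (w : m → ℝ) :
    ∫ u : n → ℝ, exp (-((w - V *ᵥ u) ⬝ᵥ (w - V *ᵥ u)) / (2 * σ₀ ^ 2)) *
        exp (-(u ⬝ᵥ u) / (2 * σu ^ 2)) =
      exp (-(w ⬝ᵥ (1 - V * S⁻¹ * Vᵀ) *ᵥ w) / (2 * σ₀ ^ 2)) *
        ∫ v : n → ℝ, exp (-(v ⬝ᵥ S *ᵥ v) / (2 * σ₀ ^ 2)) := by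
  set μ := S⁻¹ *ᵥ Vᵀ *ᵥ w
  have hprior : ∀ u : n → ℝ, -(u ⬝ᵥ u) / (2 * σu ^ 2) = -(lam * (u ⬝ᵥ u)) / (2 * σ₀ ^ 2) := by
    intro u
    rw [hlam]
    field_simp
  calc _ = ∫ u : n → ℝ, exp (-(w ⬝ᵥ (1 - V * S⁻¹ * Vᵀ) *ᵥ w) / (2 * σ₀ ^ 2)) *
        exp (-((u - μ) ⬝ᵥ S *ᵥ (u - μ)) / (2 * σ₀ ^ 2)) := by
        congr 1 with u
        rw [hprior, ← exp_add, ← exp_add, ← add_div, ← add_div, ← neg_add,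
          ← neg_add, dotProduct_sub_mulVec_add_mul_dotProduct_eq_complete_square V lam hS hdet w u,
          add_comm ((u - μ) ⬝ᵥ _)]
    _ = _ := by
      rw [integral_const_mul,
        integral_sub_right_eq_self (fun v => exp (-(v ⬝ᵥ S *ᵥ v) / (2 * σ₀ ^ 2)))]

end Gaussian

lemma mul_exp_le_mul_exp_iff {p q x y : ℝ} (hp : 0 < p) (hq : 0 < q) :
    q * exp x ≤ p * exp y ↔ 0 ≤ y - x + log (p / q) := by
  rw [← log_le_log_iff (by positivity) (by positivity), log_mul hq.ne' (exp_pos _).ne',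
    log_mul hp.ne' (exp_pos _).ne', log_exp, log_exp, log_div hp.ne' hq.ne']
  constructor <;> intro h <;> linarith

theorem fbc_nonuniform_prior_boundary_general (d k : ℕ)
    (V : Matrix (Fin k) (Fin d) ℝ) (σ₀ σu : ℝ) (hσ₀ : 0 < σ₀) (hσu : 0 < σu)
    (lam : ℝ) (hlam : lam = σ₀ ^ 2 / σu ^ 2)
    (Sig : Matrix (Fin d) (Fin d) ℝ)
    (hSig : Sig = lam • (1 : Matrix (Fin d) (Fin d) ℝ) + Vᵀ * V)
    (M : Matrix (Fin k) (Fin k) ℝ)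
    (hM : M = (1 : Matrix (Fin k) (Fin k) ℝ) - V * Sig⁻¹ * Vᵀ)
    (zp zm r : Fin k → ℝ)
    (δ : Fin k → ℝ) (hδ : δ = (1 / 2 : ℝ) • (zp - zm))
    (rbar : Fin k → ℝ) (hrbar : rbar = r - (1 / 2 : ℝ) • (zp + zm))
    (z : ℤ → Fin k → ℝ) (hz₁ : z 1 = zp) (hz₂ : z (-1) = zm)
    (g : ℤ → ℝ)
    (hg : ∀ t : ℤ, g t =
      ∫ u : Fin d → ℝ,
        Real.exp (-((r - V.mulVec u - z t) ⬝ᵥ (r - V.mulVec u - z t)) / (2 * σ₀ ^ 2)) *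
          Real.exp (-(u ⬝ᵥ u) / (2 * σu ^ 2)))
    (πp πm : ℝ) (hπp : 0 < πp) (hπm : 0 < πm) :
    πp * g 1 ≥ πm * g (-1) ↔
      2 * (δ ⬝ᵥ M.mulVec rbar) / σ₀ ^ 2 + Real.log (πp / πm) ≥ 0 := by
  have hlam₀ : 0 < lam := hlam ▸ by positivity
  have hdet : IsUnit Sig.det :=
    (isUnit_iff_isUnit_det _).mp (hSig ▸ posDef_smul_one_add_transpose_mul V hlam₀).isUnit
  set I := ∫ v : Fin d → ℝ, exp (-(v ⬝ᵥ Sig *ᵥ v) / (2 * σ₀ ^ 2))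
  have hI : 0 < I :=
    integral_exp_pos (integrable_exp_neg_dotProduct_mulVec_div hlam₀ (by positivity)
      fun x => hSig ▸ mul_dotProduct_self_le_dotProduct_mulVec V lam x)
  have hg' : ∀ t, g t = exp (-((r - z t) ⬝ᵥ M *ᵥ (r - z t)) / (2 * σ₀ ^ 2)) * I := fun t => by
    rw [hg, hM, ← integral_exp_sub_mulVec_mul_exp_eq V hσ₀.ne' hlam hSig hdet]
    simp only [sub_right_comm r]
  have hplus : r - z 1 = rbar - δ := by
    rw [hz₁, hrbar, hδ]; module
  have hminus : r - z (-1) = rbar + δ := by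
    rw [hz₂, hrbar, hδ]; module
  have hSsymm : Sig.IsSymm := hSig ▸ isSymm_smul_one_add_transpose_mul V lam
  have hMsymm : M.IsSymm := hM ▸ isSymm_one_sub_mul_mul_transpose V hSsymm.inv
  have hexponent : -((rbar - δ) ⬝ᵥ M *ᵥ (rbar - δ)) / (2 * σ₀ ^ 2) -
      -((rbar + δ) ⬝ᵥ M *ᵥ (rbar + δ)) / (2 * σ₀ ^ 2) = 2 * (δ ⬝ᵥ M *ᵥ rbar) / σ₀ ^ 2 := by
    rw [← sub_div, neg_sub_neg, hMsymm.dotProduct_mulVec_add_sub_sub]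
    field_simp
    ring
  rw [ge_iff_le, ge_iff_le, hg' 1, hg' (-1), hplus, hminus, ← mul_assoc, ← mul_assoc,
    mul_le_mul_iff_of_pos_right hI, mul_exp_le_mul_exp_iff hπp hπm, hexponent]

/-- Decision boundary with non-uniform type priors `π₊, π₋ > 0`:
`π₊ g(+1) ≥ π₋ g(−1)` iff `2 δᵀ M r̄ / σ₀² + log(π₊/π₋) ≥ 0`, i.e. the MAP type
under the priors is `+1` exactly when this inequality holds. -/
theorem fbc_nonuniform_prior_boundary (d k : ℕ) (hd : 0 < d) (hk : 0 < k)
    (V : Matrix (Fin k) (Fin d) ℝ) (σ₀ σu : ℝ) (hσ₀ : 0 < σ₀) (hσu : 0 < σu)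
    (lam : ℝ) (hlam : lam = σ₀ ^ 2 / σu ^ 2)
    (Sig : Matrix (Fin d) (Fin d) ℝ)
    (hSig : Sig = lam • (1 : Matrix (Fin d) (Fin d) ℝ) + Vᵀ * V)
    (M : Matrix (Fin k) (Fin k) ℝ)
    (hM : M = (1 : Matrix (Fin k) (Fin k) ℝ) - V * Sig⁻¹ * Vᵀ)
    (zp zm r : Fin k → ℝ)
    (δ : Fin k → ℝ) (hδ : δ = (1 / 2 : ℝ) • (zp - zm))
    (rbar : Fin k → ℝ) (hrbar : rbar = r - (1 / 2 : ℝ) • (zp + zm))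
    (z : ℤ → Fin k → ℝ) (hz₁ : z 1 = zp) (hz₂ : z (-1) = zm)
    (g : ℤ → ℝ)
    (hg : ∀ t : ℤ, g t =
      ∫ u : Fin d → ℝ,
        Real.exp (-((r - V.mulVec u - z t) ⬝ᵥ (r - V.mulVec u - z t)) / (2 * σ₀ ^ 2)) *
          Real.exp (-(u ⬝ᵥ u) / (2 * σu ^ 2)))
    (πp πm : ℝ) (hπp : 0 < πp) (hπm : 0 < πm) :
    πp * g 1 ≥ πm * g (-1) ↔
      2 * (δ ⬝ᵥ M.mulVec rbar) / σ₀ ^ 2 + Real.log (πp / πm) ≥ 0 :=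
  fbc_nonuniform_prior_boundary_general d k V σ₀ σu hσ₀ hσu lam hlam Sig hSig M hM zp zm r δ hδ rbar
    hrbar z hz₁ hz₂ g hg πp πm hπp hπm
end
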